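/- Almost every v ∈ V_{n,m} (with 1 ≤ m ≤ min(k, n-k)) can be written as v = [u₁ r^{1/2}; u₂ (I_m - r)^{1/2}] where u₁ ∈ V_{n-k,m}, u₂ ∈ V_{k,m}, and r ∈ S_m with 0 ≤ r ≤ I_m; explicitly, writing v = [a; b] with a the top (n-k)×m block and b the bottom k×m block, one has r = aᵀa, I_m - r = bᵀb, and whenever r and I_m - r are invertible, u₁ = a r^{-1/2} and u₂ = b (I_m - r)^{-1/2} are orthonormal frames. -/

import Mathlib

open Matrix

/- The positive semi-definite square root of a positive semi-definite matrix
(junk value `0` otherwise). -/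
open Classical in
noncomputable def psqrt {m : ℕ} (r : Matrix (Fin m) (Fin m) ℝ) : Matrix (Fin m) (Fin m) ℝ :=
  if h : r.PosSemidef then
    h.1.eigenvectorUnitary.1 * diagonal (Real.sqrt ∘ h.1.eigenvalues) *
      (star h.1.eigenvectorUnitary : Matrix (Fin m) (Fin m) ℝ) else 0

/-! If `v = [a; b]` has orthonormal columns then `aᵀa + bᵀb = vᵀv = I`, so `r = aᵀa` and
`I - r = bᵀb` are Gram matrices, hence positive semi-definite.  When `r` is positive definite
its square root `s` is invertible and symmetric, so `(a s⁻¹)ᵀ (a s⁻¹) = s⁻¹ (s s) s⁻¹ = I`;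
likewise for `b` and `I - r`. -/

namespace Matrix

lemma transpose_mul_self_submatrix_inl_add_inr {ι κ n R : Type*} [Fintype ι] [Fintype κ]
    [Semiring R] (v : Matrix (ι ⊕ κ) n R) :
    (v.submatrix Sum.inl id)ᵀ * v.submatrix Sum.inl id +
      (v.submatrix Sum.inr id)ᵀ * v.submatrix Sum.inr id = vᵀ * v := by
  conv_rhs => rw [← fromRows_toRows v, transpose_fromRows, fromCols_mul_fromRows]
  rfl

lemma posSemidef_transpose_mul_self {q n : Type*} [Fintype q] [Fintype n] (a : Matrix q n ℝ) :
    (aᵀ * a).PosSemidef := by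
  simpa using posSemidef_conjTranspose_mul_self a

end Matrix

section psqrt

variable {m : ℕ} {r : Matrix (Fin m) (Fin m) ℝ}

lemma psqrt_mul_self (h : r.PosSemidef) : psqrt r * psqrt r = r := by
  rw [psqrt, dif_pos h]
  have hU : (star h.1.eigenvectorUnitary.1 : Matrix (Fin m) (Fin m) ℝ) *
      h.1.eigenvectorUnitary.1 = 1 := Unitary.star_mul_self_of_mem h.1.eigenvectorUnitary.2
  calc _ = h.1.eigenvectorUnitary.1 * (diagonal (Real.sqrt ∘ h.1.eigenvalues) *
        diagonal (Real.sqrt ∘ h.1.eigenvalues)) *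
        (star h.1.eigenvectorUnitary : Matrix (Fin m) (Fin m) ℝ) := by
          simp only [Matrix.mul_assoc]
          rw [← Matrix.mul_assoc (star _) _, hU, Matrix.one_mul]
    _ = r := by
      rw [diagonal_mul_diagonal]
      conv_rhs => rw [h.1.spectral_theorem]
      rw [Unitary.conjStarAlgAut_apply]
      congr 3
      ext i
      simp [Real.mul_self_sqrt (h.eigenvalues_nonneg i)]

lemma transpose_psqrt (h : r.PosSemidef) : (psqrt r)ᵀ = psqrt r := by
  rw [psqrt, dif_pos h]
  simp only [star_eq_conjTranspose, conjTranspose_eq_transpose_of_trivial, transpose_mul,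
    diagonal_transpose, transpose_transpose, Matrix.mul_assoc]

lemma isUnit_det_psqrt (h : r.PosDef) : IsUnit (psqrt r).det :=
  isUnit_iff_ne_zero.2 fun h0 => h.det_pos.ne' <| by
    rw [← psqrt_mul_self h.posSemidef, det_mul, h0, zero_mul]

lemma mul_inv_psqrt_transpose_mul_self {q : Type*} [Fintype q] {a : Matrix q (Fin m) ℝ}
    (ha : aᵀ * a = r) (h : r.PosDef) :
    (a * (psqrt r)⁻¹)ᵀ * (a * (psqrt r)⁻¹) = 1 := by
  have hs := isUnit_det_psqrt h
  calc (a * (psqrt r)⁻¹)ᵀ * (a * (psqrt r)⁻¹)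
      = (psqrt r)⁻¹ * (psqrt r * psqrt r) * (psqrt r)⁻¹ := by
        rw [transpose_mul, transpose_nonsing_inv, transpose_psqrt h.posSemidef,
          psqrt_mul_self h.posSemidef, ← ha]
        simp only [Matrix.mul_assoc]
    _ = 1 := by
      rw [← Matrix.mul_assoc, nonsing_inv_mul _ hs, Matrix.one_mul, mul_nonsing_inv _ hs]

end psqrt

theorem biStiefel_coordinates_general (p k m : ℕ)
    (v : Matrix (Fin p ⊕ Fin k) (Fin m) ℝ)
    (hv : vᵀ * v = (1 : Matrix (Fin m) (Fin m) ℝ)) :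
    ((v.submatrix Sum.inl id)ᵀ * (v.submatrix Sum.inl id)).PosSemidef ∧
    (1 - (v.submatrix Sum.inl id)ᵀ * (v.submatrix Sum.inl id))
      = (v.submatrix Sum.inr id)ᵀ * (v.submatrix Sum.inr id) ∧
    (1 - (v.submatrix Sum.inl id)ᵀ * (v.submatrix Sum.inl id)).PosSemidef ∧
    (((v.submatrix Sum.inl id)ᵀ * (v.submatrix Sum.inl id)).PosDef →
      (1 - (v.submatrix Sum.inl id)ᵀ * (v.submatrix Sum.inl id)).PosDef →
      (v.submatrix Sum.inl id *
          (psqrt ((v.submatrix Sum.inl id)ᵀ * (v.submatrix Sum.inl id)))⁻¹)ᵀ *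
        (v.submatrix Sum.inl id *
          (psqrt ((v.submatrix Sum.inl id)ᵀ * (v.submatrix Sum.inl id)))⁻¹) = 1 ∧
      (v.submatrix Sum.inr id *
          (psqrt (1 - (v.submatrix Sum.inl id)ᵀ * (v.submatrix Sum.inl id)))⁻¹)ᵀ *
        (v.submatrix Sum.inr id *
          (psqrt (1 - (v.submatrix Sum.inl id)ᵀ * (v.submatrix Sum.inl id)))⁻¹) = 1 ∧
      v = Matrix.fromRows
        ((v.submatrix Sum.inl id *
            (psqrt ((v.submatrix Sum.inl id)ᵀ * (v.submatrix Sum.inl id)))⁻¹) *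
          psqrt ((v.submatrix Sum.inl id)ᵀ * (v.submatrix Sum.inl id)))
        ((v.submatrix Sum.inr id *
            (psqrt (1 - (v.submatrix Sum.inl id)ᵀ * (v.submatrix Sum.inl id)))⁻¹) *
          psqrt (1 - (v.submatrix Sum.inl id)ᵀ * (v.submatrix Sum.inl id)))) := by
  set a := v.submatrix Sum.inl id
  set b := v.submatrix Sum.inr id
  have hba : 1 - aᵀ * a = bᵀ * b := by
    rw [← hv, ← transpose_mul_self_submatrix_inl_add_inr, add_sub_cancel_left]
  refine ⟨posSemidef_transpose_mul_self a, hba, hba ▸ posSemidef_transpose_mul_self b,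
    fun ha hb => ⟨mul_inv_psqrt_transpose_mul_self rfl ha,
      mul_inv_psqrt_transpose_mul_self hba.symm hb, ?_⟩⟩
  rw [nonsing_inv_mul_cancel_right _ _ (isUnit_det_psqrt ha),
    nonsing_inv_mul_cancel_right _ _ (isUnit_det_psqrt hb)]
  exact (fromRows_toRows v).symm

/-- Bi-Stiefel coordinates on `V_{n,m}` (`n = p + k`, `p = n - k`,
`1 ≤ m ≤ min(k, p)`):  for `v ∈ V_{n,m}`, write `v = [a; b]` with top block
`a ∈ M_{p,m}` and bottom block `b ∈ M_{k,m}` and put `r = aᵀa`.  Then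
`0 ≤ r ≤ I_m` in the Loewner order, `I_m - r = bᵀb`, and whenever `r` and
`I_m - r` are invertible (which happens almost everywhere), `u₁ = a r^{-1/2}` and
`u₂ = b (I_m - r)^{-1/2}` are orthonormal frames, i.e. `u₁ ∈ V_{p,m}`,
`u₂ ∈ V_{k,m}`, and `v = [u₁ r^{1/2}; u₂ (I_m - r)^{1/2}]`. -/
theorem biStiefel_coordinates (p k m : ℕ) (hm : 1 ≤ m) (hmk : m ≤ k) (hmp : m ≤ p)
    (v : Matrix (Fin p ⊕ Fin k) (Fin m) ℝ)
    (hv : vᵀ * v = (1 : Matrix (Fin m) (Fin m) ℝ)) :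
    ((v.submatrix Sum.inl id)ᵀ * (v.submatrix Sum.inl id)).PosSemidef ∧
    (1 - (v.submatrix Sum.inl id)ᵀ * (v.submatrix Sum.inl id))
      = (v.submatrix Sum.inr id)ᵀ * (v.submatrix Sum.inr id) ∧
    (1 - (v.submatrix Sum.inl id)ᵀ * (v.submatrix Sum.inl id)).PosSemidef ∧
    (((v.submatrix Sum.inl id)ᵀ * (v.submatrix Sum.inl id)).PosDef →
      (1 - (v.submatrix Sum.inl id)ᵀ * (v.submatrix Sum.inl id)).PosDef →
      (v.submatrix Sum.inl id *
          (psqrt ((v.submatrix Sum.inl id)ᵀ * (v.submatrix Sum.inl id)))⁻¹)ᵀ *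
        (v.submatrix Sum.inl id *
          (psqrt ((v.submatrix Sum.inl id)ᵀ * (v.submatrix Sum.inl id)))⁻¹) = 1 ∧
      (v.submatrix Sum.inr id *
          (psqrt (1 - (v.submatrix Sum.inl id)ᵀ * (v.submatrix Sum.inl id)))⁻¹)ᵀ *
        (v.submatrix Sum.inr id *
          (psqrt (1 - (v.submatrix Sum.inl id)ᵀ * (v.submatrix Sum.inl id)))⁻¹) = 1 ∧
      v = Matrix.fromRows
        ((v.submatrix Sum.inl id *
            (psqrt ((v.submatrix Sum.inl id)ᵀ * (v.submatrix Sum.inl id)))⁻¹) *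
          psqrt ((v.submatrix Sum.inl id)ᵀ * (v.submatrix Sum.inl id)))
        ((v.submatrix Sum.inr id *
            (psqrt (1 - (v.submatrix Sum.inl id)ᵀ * (v.submatrix Sum.inl id)))⁻¹) *
          psqrt (1 - (v.submatrix Sum.inl id)ᵀ * (v.submatrix Sum.inl id)))) :=
  biStiefel_coordinates_general p k m v hv
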